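/- Let k ∈ ℂ, let z₁, z₂ ∈ ℂ be nonzero, let L₁, L₂ ∈ ℂ, and define c_n = (−1)^n · (L₁ · z₁^{−n} + L₂ · z₂^{−n}) · γ_n(k) for n ∈ ℕ. Let n ≥ 1 and suppose c_{n−1} ≠ 0 and c_n ≠ 0, and set R_m = c_{m+1}/c_m. Then (n+1) · R_n · z₁ · z₂ − (n − k) · ( (z₁ + z₂) − (n − k − 1)/(n · R_{n−1}) ) = 0. -/

import Mathlib

/-!
The sequence a_n = L₁z₁^{-n} + L₂z₂^{-n} satisfies the linear recurrence
z₁z₂ a_{n+2} − (z₁+z₂) a_{n+1} + a_n = 0 of characteristic roots z₁⁻¹, z₂⁻¹, and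
γ_{n+1}(k) = γ_n(k)(k−n)/(n+1) gives (n+1) R_n = (n−k) a_{n+1}/a_n. Substituting both ratios
into (22) turns its left side into a multiple of the recurrence.
-/

/-- The generalized binomial coefficient γ_n(k) = k(k−1)⋯(k−n+1)/n!, with γ_0(k) = 1. -/
noncomputable def genBinom (k : ℂ) (n : ℕ) : ℂ :=
  (∏ i ∈ Finset.range n, (k - i)) / (n.factorial : ℂ)

theorem genBinom_succ (k : ℂ) (n : ℕ) :
    genBinom k (n + 1) = genBinom k n * (k - n) / (n + 1) := by
  simp only [genBinom, Finset.prod_range_succ, Nat.factorial_succ]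
  push_cast
  field_simp

theorem add_zpow_neg_recurrence {K : Type*} [Field K] {z₁ z₂ : K} (hz₁ : z₁ ≠ 0)
    (hz₂ : z₂ ≠ 0) (L₁ L₂ : K) {a : ℕ → K}
    (ha : ∀ n : ℕ, a n = L₁ * z₁ ^ (-(n : ℤ)) + L₂ * z₂ ^ (-(n : ℤ))) (n : ℕ) :
    z₁ * z₂ * a (n + 2) - (z₁ + z₂) * a (n + 1) + a n = 0 := by
  simp only [ha, zpow_neg, zpow_natCast, pow_succ]
  field_simp
  ring

theorem mul_div_eq_of_eq_neg_one_pow_mul_genBinom {k : ℂ} {a c : ℕ → ℂ}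
    (hc : ∀ n : ℕ, c n = (-1) ^ n * a n * genBinom k n) {n : ℕ} (hn : c n ≠ 0) :
    (n + 1) * (c (n + 1) / c n) = (n - k) * (a (n + 1) / a n) := by
  rw [hc n] at hn ⊢
  have ha : a n ≠ 0 := right_ne_zero_of_mul (left_ne_zero_of_mul hn)
  have hγ : genBinom k n ≠ 0 := right_ne_zero_of_mul hn
  rw [hc, genBinom_succ, pow_succ]
  field_simp
  ring

/-- The basic equation (22) for two singularities of equal order k: with
c_n = (−1)^n (L₁z₁^{−n} + L₂z₂^{−n}) γ_n(k) and R_m = c_{m+1}/c_m, for n ≥ 1 with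
c_{n−1} ≠ 0 and c_n ≠ 0,
(n+1)R_n z₁ z₂ − (n−k)((z₁+z₂) − (n−k−1)/(nR_{n−1})) = 0. -/
theorem stmt_15 (k z₁ z₂ L₁ L₂ : ℂ) (hz₁ : z₁ ≠ 0) (hz₂ : z₂ ≠ 0) (c R : ℕ → ℂ)
    (hc : ∀ n : ℕ,
      c n = (-1) ^ n * (L₁ * z₁ ^ (-(n : ℤ)) + L₂ * z₂ ^ (-(n : ℤ))) * genBinom k n)
    (hR : ∀ m : ℕ, R m = c (m + 1) / c m)
    (n : ℕ) (hn : 1 ≤ n) (h1 : c (n - 1) ≠ 0) (h2 : c n ≠ 0) :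
    ((n : ℂ) + 1) * R n * z₁ * z₂ -
        ((n : ℂ) - k) * ((z₁ + z₂) - ((n : ℂ) - k - 1) / ((n : ℂ) * R (n - 1))) = 0 := by
  obtain ⟨m, rfl⟩ : ∃ m, n = m + 1 := ⟨n - 1, by omega⟩
  rw [Nat.add_sub_cancel] at h1 ⊢
  obtain ⟨a, ha⟩ : ∃ a : ℕ → ℂ, ∀ i : ℕ, a i = L₁ * z₁ ^ (-(i : ℤ)) + L₂ * z₂ ^ (-(i : ℤ)) :=
    ⟨_, fun _ => rfl⟩
  simp only [← ha] at hc
  have hrec := add_zpow_neg_recurrence hz₁ hz₂ L₁ L₂ ha m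
  have hR₁ := mul_div_eq_of_eq_neg_one_pow_mul_genBinom hc h2
  have hR₀ := mul_div_eq_of_eq_neg_one_pow_mul_genBinom hc h1
  rw [← hR] at hR₀ hR₁
  have hRm : R m ≠ 0 := by rw [hR]; exact div_ne_zero h2 h1
  obtain ⟨hmk, hρ₀⟩ := mul_ne_zero_iff.mp (hR₀ ▸ mul_ne_zero (Nat.cast_add_one_ne_zero m) hRm)
  obtain ⟨ha₁, ha₀⟩ := div_ne_zero_iff.mp hρ₀
  push_cast at hR₁ ⊢
  rw [hR₁, show (m : ℂ) + 1 - k - 1 = m - k by ring, hR₀, div_mul_cancel_left₀ hmk, inv_div]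
  field_simp
  linear_combination (↑m + 1 - k) * hrec
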